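/- Let r ≥ 2, let Δ(C_r) be the convex hull of {2e_i, −2e_i : 1 ≤ i ≤ r} in ℝ^r, and let σ be the convex cone generated by Δ(C_r) − 2e_1. Then 2e_2 − 2e_1 ∈ σ, but −2e_1 − (2e_2 − 2e_1) = −2e_2 ∉ σ. -/

import Mathlib

noncomputable section

/-- The standard basis vector `e i` of `ℝ^r` (0-based: `b r 0` is `e₁`, `b r 1` is `e₂`). -/
def b (r : ℕ) (i : Fin r) : Fin r → ℝ := Pi.single i 1

/-- The long roots `±2e_i` of type `C_r`. -/
def longRootsC (r : ℕ) : Set (Fin r → ℝ) :=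
  {v | ∃ i : Fin r, v = (2 : ℝ) • b r i ∨ v = -((2 : ℝ) • b r i)}

/-- The root polytope `Δ(C_r)`: the convex hull of the long roots `±2e_i`. -/
def DeltaC (r : ℕ) : Set (Fin r → ℝ) := convexHull ℝ (longRootsC r)

/-- The convex cone generated by a set `S`: all finite sums of nonnegative real multiples
of elements of `S`. -/
def coneGen {V : Type*} [AddCommMonoid V] [Module ℝ V] (S : Set V) : Set V :=
  {x | ∃ (n : ℕ) (c : Fin n → ℝ) (f : Fin n → V),
    (∀ i, 0 ≤ c i) ∧ (∀ i, f i ∈ S) ∧ x = ∑ i, c i • f i}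

/-!
`2e₂ - 2e₁` is the long root `2e₂` shifted by `-2e₁`, hence a generator of `σ`. The functional
`v ↦ v₁ - v₂` is at most `2` on every long root, hence on `Δ(C_r)`; so it is `≤ 0` on
`Δ(C_r) - 2e₁` and therefore on `σ`, while it takes the value `2` at `-2e₂`.
-/

section coneGen

variable {V : Type*} [AddCommMonoid V] [Module ℝ V]

theorem subset_coneGen (S : Set V) : S ⊆ coneGen S :=
  fun x hx => ⟨1, fun _ => 1, fun _ => x, fun _ => zero_le_one, fun _ => hx, by simp⟩

theorem forall_mem_coneGen_nonpos (ℓ : V →ₗ[ℝ] ℝ) {S : Set V} (hS : ∀ x ∈ S, ℓ x ≤ 0) :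
    ∀ x ∈ coneGen S, ℓ x ≤ 0 := by
  rintro x ⟨n, c, f, hc, hf, rfl⟩
  simp only [map_sum, map_smul, smul_eq_mul]
  exact Finset.sum_nonpos fun i _ => mul_nonpos_of_nonneg_of_nonpos (hc i) (hS _ (hf i))

end coneGen

theorem b_apply_self {r : ℕ} (i : Fin r) : b r i i = 1 := Pi.single_eq_same i 1

theorem b_apply_of_ne {r : ℕ} {i j : Fin r} (h : j ≠ i) : b r i j = 0 :=
  Pi.single_eq_of_ne h 1

def coordDiff (r : ℕ) (i j : Fin r) : (Fin r → ℝ) →ₗ[ℝ] ℝ :=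
  LinearMap.proj (R := ℝ) (φ := fun _ : Fin r => ℝ) i - LinearMap.proj j

@[simp]
theorem coordDiff_apply {r : ℕ} (i j : Fin r) (v : Fin r → ℝ) : coordDiff r i j v = v i - v j :=
  rfl

theorem coordDiff_le_two_of_mem_DeltaC {r : ℕ} (i j : Fin r) {v : Fin r → ℝ}
    (hv : v ∈ DeltaC r) : coordDiff r i j v ≤ 2 := by
  suffices DeltaC r ⊆ coordDiff r i j ⁻¹' Set.Iic 2 from this hv
  refine convexHull_min ?_ ((convex_Iic 2).linear_preimage _)
  rintro _ ⟨k, rfl | rfl⟩ <;>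
    simp only [Set.mem_preimage, Set.mem_Iic, coordDiff_apply, Pi.neg_apply, Pi.smul_apply,
      smul_eq_mul, b, Pi.single_apply] <;>
    split_ifs <;> norm_num

theorem coordDiff_nonpos_of_mem_shift_DeltaC {r : ℕ} {i j : Fin r} (hji : j ≠ i) :
    ∀ x ∈ (fun v => v - (2 : ℝ) • b r i) '' DeltaC r, coordDiff r i j x ≤ 0 := by
  rintro _ ⟨v, hv, rfl⟩
  have hle := coordDiff_le_two_of_mem_DeltaC i j hv
  simp only [coordDiff_apply, Pi.sub_apply, Pi.smul_apply, smul_eq_mul, b_apply_self,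
    b_apply_of_ne hji] at hle ⊢
  linarith

theorem stmt16 (r : ℕ) (hr : 2 ≤ r) :
    (2 : ℝ) • b r ⟨1, by omega⟩ - (2 : ℝ) • b r ⟨0, by omega⟩ ∈
      coneGen ((fun x => x - (2 : ℝ) • b r ⟨0, by omega⟩) '' DeltaC r) ∧
    -((2 : ℝ) • b r ⟨1, by omega⟩) ∉
      coneGen ((fun x => x - (2 : ℝ) • b r ⟨0, by omega⟩) '' DeltaC r) := by
  set i : Fin r := ⟨0, by omega⟩
  set j : Fin r := ⟨1, by omega⟩
  have hji : j ≠ i := by simp [i, j, Fin.ext_iff]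
  refine ⟨subset_coneGen _ ⟨_, subset_convexHull ℝ _ ⟨j, Or.inl rfl⟩, rfl⟩, fun hσ => ?_⟩
  have hle := forall_mem_coneGen_nonpos _ (coordDiff_nonpos_of_mem_shift_DeltaC hji) _ hσ
  norm_num [b_apply_self, b_apply_of_ne hji.symm] at hle
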